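/- arXiv:math/0101252 — 8 statements merged into one kernel-verified Lean document; each statement's English description precedes it below -/
import Mathlib

section
/- Let T be an element of the Schur class S(H), i.e. a structured upper triangular contraction on ℓ²(F_N^+), and let A = 1 - T*T. Then A satisfies the displacement equation A - Σ_{k=1}^N C_k A C_k* = P_∅ - T* P_∅ T, where P_∅ is the orthogonal projection of ℓ²(F_N^+) onto the one-dimensional span of e_∅. (The right-hand side is G J G* for the generator G with columns (δ_{σ,∅})_σ and (conj T(∅,σ))_σ and the signature J = diag(1,-1).) -/
open scoped ComplexOrder

noncomputable section

/-- Words over the alphabet `{1,…,N}`: the free monoid `F_N^+` (the empty list is `∅`). -/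
abbrev Word (N : ℕ) := List (Fin N)

/-- The Hilbert space `ℓ²(F_N^+)`. -/
abbrev H2 (N : ℕ) : Type := lp (fun _ : Word N => ℂ) 2

/-- The canonical orthonormal basis vector `e_σ`. -/
def eb {N : ℕ} (σ : Word N) : H2 N := lp.single 2 σ 1

/-- The matrix entry `T(σ,τ) = ⟨T e_τ, e_σ⟩` (inner product linear in the first argument). -/
def entry {N : ℕ} (T : H2 N →L[ℂ] H2 N) (σ τ : Word N) : ℂ := (T (eb τ)) σ

/-- `T` is structured upper triangular. -/
def IsSUT {N : ℕ} (T : H2 N →L[ℂ] H2 N) : Prop :=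
  (∀ (a b : Fin N) (σ τ : Word N),
      entry T (a :: σ) (b :: τ) = if a = b then entry T σ τ else 0) ∧
  (∀ σ τ : Word N, τ.length < σ.length → entry T σ τ = 0)

/-! The backward shifts `Cₖ*` commute with a structured upper triangular `T`: the first structure
condition gives this on `e_{jτ}`, triangularity on `e_∅`. Hence `Cₖ (1 - T*T) Cₖ* = Cₖ Cₖ* - T* Cₖ Cₖ* T`,
and summing over `k` with `∑ₖ Cₖ Cₖ* = 1 - P_∅` yields the displacement equation. -/

open scoped ComplexInnerProductSpace

open ContinuousLinearMap (adjoint)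

theorem one_sub_star_mul_self_sub_sum_eq {R ι : Type*} [Ring R] [StarRing R] [Fintype ι]
    (c : ι → R) (t p : R) (hc : ∑ k, c k * star (c k) = 1 - p)
    (ht : ∀ k, Commute (star (c k)) t) :
    (1 - star t * t) - ∑ k, c k * ((1 - star t * t) * star (c k)) = p - star t * (p * t) := by
  have hterm : ∀ k, c k * ((1 - star t * t) * star (c k))
      = c k * star (c k) - star t * (c k * star (c k) * t) := fun k => by
    have ht' : c k * star t = star t * c k := by simpa using ((ht k).star_star).eq
    calc c k * ((1 - star t * t) * star (c k))
        = c k * star (c k) - (c k * star t) * (t * star (c k)) := by noncomm_ring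
      _ = c k * star (c k) - (star t * c k) * (star (c k) * t) := by rw [ht', (ht k).eq]
      _ = c k * star (c k) - star t * (c k * star (c k) * t) := by noncomm_ring
  rw [Finset.sum_congr rfl fun k _ => hterm k, Finset.sum_sub_distrib, ← Finset.mul_sum,
    ← Finset.sum_mul, hc]
  noncomm_ring

section Basis

variable {N : ℕ}

theorem eb_apply (σ τ : Word N) : eb σ τ = if τ = σ then 1 else 0 := by
  simp [eb, lp.single_apply, Pi.single_apply]

theorem inner_eb_left (σ : Word N) (f : H2 N) : ⟪eb σ, f⟫ = f σ := by
  simp [eb, lp.inner_single_left]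

theorem ext_eb {F : Type*} [AddCommMonoid F] [Module ℂ F] [TopologicalSpace F] [T2Space F]
    {A B : H2 N →L[ℂ] F} (h : ∀ σ, A (eb σ) = B (eb σ)) : A = B :=
  lp.ext_continuousLinearMap ENNReal.ofNat_ne_top fun σ => ContinuousLinearMap.ext_ring (h σ)

theorem adjoint_apply_eq_inner (A : H2 N →L[ℂ] H2 N) (x : H2 N) (σ : Word N) :
    adjoint A x σ = ⟪A (eb σ), x⟫ := by
  rw [← inner_eb_left, ContinuousLinearMap.adjoint_inner_right]

end Basis

section Shift

variable {N : ℕ} {k : Fin N} {V : H2 N →L[ℂ] H2 N}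

theorem adjoint_shift_apply (hV : ∀ σ, V (eb σ) = eb (k :: σ)) (x : H2 N) (σ : Word N) :
    adjoint V x σ = x (k :: σ) := by
  rw [adjoint_apply_eq_inner, hV, inner_eb_left]

theorem adjoint_shift_eb_nil (hV : ∀ σ, V (eb σ) = eb (k :: σ)) : adjoint V (eb []) = 0 := by
  ext σ
  simp [adjoint_shift_apply hV, eb_apply]

theorem adjoint_shift_eb_cons (hV : ∀ σ, V (eb σ) = eb (k :: σ)) (j : Fin N) (τ : Word N) :
    adjoint V (eb (j :: τ)) = if j = k then eb τ else 0 := by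
  ext σ
  rcases eq_or_ne j k with rfl | h
  · simp [adjoint_shift_apply hV, eb_apply]
  · simp [adjoint_shift_apply hV, eb_apply, h, Ne.symm h]

theorem IsSUT.commute_adjoint_shift {T : H2 N →L[ℂ] H2 N} (hT : IsSUT T)
    (hV : ∀ σ, V (eb σ) = eb (k :: σ)) : Commute (adjoint V) T := by
  refine ext_eb fun τ => ?_
  ext σ
  change adjoint V (T (eb τ)) σ = T (adjoint V (eb τ)) σ
  rw [adjoint_shift_apply hV]
  change entry T (k :: σ) τ = _
  cases τ with
  | nil => rw [hT.2 _ _ (by simp), adjoint_shift_eb_nil hV, map_zero]; rfl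
  | cons j τ =>
    rw [hT.1, adjoint_shift_eb_cons hV]
    rcases eq_or_ne j k with rfl | h
    · simp [entry]
    · simp [h, h.symm]

theorem sum_shift_comp_adjoint {C : Fin N → (H2 N →L[ℂ] H2 N)}
    (hC : ∀ k σ, C k (eb σ) = eb (k :: σ)) {P : H2 N →L[ℂ] H2 N}
    (hP : ∀ f : H2 N, P f = f [] • eb []) :
    ∑ k, C k ∘L adjoint (C k) = 1 - P := by
  refine ext_eb fun τ => ?_
  rw [sum_apply]
  cases τ with
  | nil => simp [adjoint_shift_eb_nil (hC _), hP, eb_apply]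
  | cons j τ =>
    simp [adjoint_shift_eb_cons (hC _), apply_ite, hC, hP, eb_apply]

end Shift

theorem schur_displacement_general {N : ℕ}
    (T : H2 N →L[ℂ] H2 N) (hT : IsSUT T)
    (C : Fin N → (H2 N →L[ℂ] H2 N))
    (hC : ∀ (k : Fin N) (σ : Word N), C k (eb σ) = eb (k :: σ))
    (P : H2 N →L[ℂ] H2 N)
    (hP : ∀ f : H2 N, P f = (f ([] : Word N)) • eb ([] : Word N)) :
    (1 - ContinuousLinearMap.adjoint T ∘L T)
        - ∑ k : Fin N, C k ∘L ((1 - ContinuousLinearMap.adjoint T ∘L T)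
            ∘L ContinuousLinearMap.adjoint (C k))
      = P - ContinuousLinearMap.adjoint T ∘L (P ∘L T) := by
  -- on `H2 N →L[ℂ] H2 N`, `star` is `adjoint` and `*` is `∘L` by definition
  exact one_sub_star_mul_self_sub_sum_eq C T P (sum_shift_comp_adjoint hC hP)
    fun k => hT.commute_adjoint_shift (hC k)

/-- For `T` in the Schur class `S(H)` and `A = 1 - T*T`, the displacement
equation `A - ∑ₖ Cₖ A Cₖ* = P_∅ - T* P_∅ T` holds, where `Cₖ e_σ = e_{kσ}` and `P_∅` is the
orthogonal projection onto the span of `e_∅`. -/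
theorem schur_displacement {N : ℕ} (hN : 1 ≤ N)
    (T : H2 N →L[ℂ] H2 N) (hT : IsSUT T) (hTnorm : ‖T‖ ≤ 1)
    (C : Fin N → (H2 N →L[ℂ] H2 N))
    (hC : ∀ (k : Fin N) (σ : Word N), C k (eb σ) = eb (k :: σ))
    (P : H2 N →L[ℂ] H2 N)
    (hP : ∀ f : H2 N, P f = (f ([] : Word N)) • eb ([] : Word N)) :
    (1 - ContinuousLinearMap.adjoint T ∘L T)
        - ∑ k : Fin N, C k ∘L ((1 - ContinuousLinearMap.adjoint T ∘L T)
            ∘L ContinuousLinearMap.adjoint (C k))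
      = P - ContinuousLinearMap.adjoint T ∘L (P ∘L T) :=
  schur_displacement_general T hT C hC P hP

end
end

section
/- Let K be a positive definite multi-Toeplitz kernel on F_N^+ with K(∅,∅) = 1, let n ≥ 1, and let K_n be the I_n × I_n matrix with entries (K_n)_{σ,τ} = K(σ,τ). Define p, q : I_n → ℂ by p(∅) = 1, p(σ) = conj(K(∅,σ)) for σ ≠ ∅, q(∅) = 0, q(σ) = conj(K(∅,σ)) for σ ≠ ∅. Then K_n − Σ_{k=1}^N C_{k,n} K_n C_{k,n}ᴴ equals the I_n × I_n matrix whose (σ,τ) entry is p(σ)·conj(p(τ)) − q(σ)·conj(q(τ)) (here ᴴ denotes the conjugate transpose). -/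
open scoped ComplexOrder Matrix

noncomputable section

/-- `I_n = {σ ∈ F_N^+ : |σ| ≤ n}`, a finite set. -/
abbrev In (N n : ℕ) := {σ : Word N // σ.length ≤ n}

instance {N n : ℕ} : Fintype (In N n) := (List.finite_length_le (Fin N) n).fintype

/-- The `I_n × I_n` matrix `C_{k,n}` with entries `1` at `(kτ, τ)` and `0` elsewhere. -/
def Cmat {N n : ℕ} (k : Fin N) : Matrix (In N n) (In N n) ℂ :=
  Matrix.of fun σ τ => if σ.1 = k :: τ.1 then 1 else 0

/-- For `x : I_n → ℂ`, the matrix `U(x)` with `U(x)_{σ,τ} = x(τ')` if `τ = στ'` and `0`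
otherwise. -/
def Umat {N n : ℕ} (x : In N n → ℂ) : Matrix (In N n) (In N n) ℂ :=
  Matrix.of fun σ τ =>
    if h : σ.1 <+: τ.1 then
      x ⟨τ.1.drop σ.1.length, by rw [List.length_drop]; exact le_trans (Nat.sub_le _ _) τ.2⟩
    else 0

/-- `K` is a positive definite kernel on `F_N^+`. -/
def PosDefKernel {N : ℕ} (K : Word N → Word N → ℂ) : Prop :=
  ∀ (m : ℕ) (σ : Fin m → Word N) (c : Fin m → ℂ),
    0 ≤ ∑ i, ∑ j, K (σ i) (σ j) * c j * (starRingEnd ℂ) (c i)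

/-- `K` is invariant under the action of `F_N^+` on itself by juxtaposition. -/
def InvariantKernel {N : ℕ} (K : Word N → Word N → ℂ) : Prop :=
  ∀ τ σ σ' : Word N, K (τ ++ σ) (τ ++ σ') = K σ σ'

/-- `K` is a (positive definite) multi-Toeplitz kernel on `F_N^+`. -/
def MultiToeplitz {N : ℕ} (K : Word N → Word N → ℂ) : Prop :=
  InvariantKernel K ∧ PosDefKernel K ∧
    ∀ σ τ : Word N, (∀ α : Word N, σ ≠ α ++ τ ∧ τ ≠ α ++ σ) → K σ τ = 0

/-!
Entrywise, `∑ₖ C_k K_n C_kᴴ` at `(σ, τ)` is `K(σ', τ')` when `σ = kσ'` and `τ = kτ'` start with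
the same letter `k`, and `0` otherwise. So the displacement agrees with `K_n` on the row and
column of `∅`, which match `p, q` because `K` is Hermitian. Elsewhere it is either
`K(kσ', kτ') - K(σ', τ') = 0` by invariance, or `K(xσ', yτ')` with `x ≠ y`; the latter vanishes
because after prepending `x^m`, `m` large, neither word is a suffix of the other.
-/

namespace List

theorem not_replicate_append_cons_suffix_of_ne {α : Type*} {x y : α} (hxy : x ≠ y)
    {xs ys : List α} {m : ℕ} (hm : ys.length ≤ m) :
    ¬ replicate m x ++ x :: xs <:+ replicate m x ++ y :: ys := by
  intro h
  set d := ys.length - xs.length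
  have hd : d ≤ m := by omega
  have hsplit : replicate m x ++ x :: xs = replicate (m - d) x ++ x :: (replicate d x ++ xs) := by
    obtain ⟨e, rfl⟩ := Nat.exists_eq_add_of_le' hd
    rw [Nat.add_sub_cancel, ← replicate_append_replicate, append_assoc, ← cons_append,
      ← replicate_succ, replicate_succ', append_assoc, singleton_append]
  have hdrop : drop d (replicate m x ++ y :: ys) = replicate (m - d) x ++ y :: ys := by
    rw [drop_append_of_le_length (by simp; omega), drop_replicate]
  rw [suffix_iff_eq_drop] at h
  simp only [length_append, length_replicate, length_cons] at h
  rw [show m + (ys.length + 1) - (m + (xs.length + 1)) = d by omega, hdrop, hsplit] at h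
  exact hxy (cons.inj (append_cancel_left h)).1

end List

theorem PosDefKernel.conj_apply_swap {N : ℕ} {K : Word N → Word N → ℂ} (hK : PosDefKernel K)
    (σ τ : Word N) : starRingEnd ℂ (K τ σ) = K σ τ := by
  have him : ∀ c₀ c₁ : ℂ,
      (K σ σ * c₀ * starRingEnd ℂ c₀ + K σ τ * c₁ * starRingEnd ℂ c₀
        + (K τ σ * c₀ * starRingEnd ℂ c₁ + K τ τ * c₁ * starRingEnd ℂ c₁)).im = 0 := by
    intro c₀ c₁
    have h := hK 2 ![σ, τ] ![c₀, c₁]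
    simp only [Fin.sum_univ_two, Matrix.cons_val_zero, Matrix.cons_val_one] at h
    exact (Complex.le_def.mp h).2.symm
  have h10 := him 1 0
  have h01 := him 0 1
  have h11 := him 1 1
  have h1I := him 1 Complex.I
  simp only [mul_one, map_one, mul_zero, add_zero, map_zero, zero_add, Complex.add_im,
    Complex.conj_I, mul_neg, Complex.mul_im, Complex.I_im, Complex.I_re, Complex.neg_im,
    Complex.mul_re, zero_sub, neg_neg, Complex.ext_iff, Complex.conj_re, Complex.conj_im]
    at h10 h01 h11 h1I ⊢
  constructor <;> linarith

theorem MultiToeplitz.apply_eq_zero_of_not_suffix {N : ℕ} {K : Word N → Word N → ℂ}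
    (hK : MultiToeplitz K) {σ τ : Word N} (hστ : ¬ σ <:+ τ) (hτσ : ¬ τ <:+ σ) : K σ τ = 0 :=
  hK.2.2 σ τ fun α => ⟨fun h => hτσ ⟨α, h.symm⟩, fun h => hστ ⟨α, h.symm⟩⟩

open List in
theorem MultiToeplitz.apply_cons_cons_of_ne {N : ℕ} {K : Word N → Word N → ℂ}
    (hK : MultiToeplitz K) {x y : Fin N} (hxy : x ≠ y) (xs ys : Word N) :
    K (x :: xs) (y :: ys) = 0 := by
  wlog hlen : xs.length ≤ ys.length generalizing x y xs ys
  · rw [← hK.2.1.conj_apply_swap, this hxy.symm ys xs (by omega), map_zero]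
  rw [← hK.1 (replicate ys.length x)]
  refine hK.apply_eq_zero_of_not_suffix
    (not_replicate_append_cons_suffix_of_ne hxy le_rfl) fun h => hxy ?_
  have hlen' := h.length_le
  simp only [length_append, length_cons] at hlen'
  exact (cons.inj (append_cancel_left (h.eq_of_length (by simp; omega)))).1.symm

section Cmat

variable {N n : ℕ} (k : Fin N) (A : Matrix (In N n) (In N n) ℂ)

theorem Cmat_mul_apply_nil (h : ([] : Word N).length ≤ n) (τ : In N n) :
    (Cmat k * A : Matrix (In N n) (In N n) ℂ) ⟨[], h⟩ τ = 0 := by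
  simp [Matrix.mul_apply, Cmat]

theorem Cmat_mul_apply_cons {x : Fin N} {xs : Word N} (h : (x :: xs).length ≤ n) (τ : In N n) :
    (Cmat k * A : Matrix (In N n) (In N n) ℂ) ⟨x :: xs, h⟩ τ =
      if k = x then A ⟨xs, (Nat.le_succ _).trans h⟩ τ else 0 := by
  have hrow : ∀ β : In N n, x :: xs = k :: β.1 ↔ k = x ∧ β = ⟨xs, (Nat.le_succ _).trans h⟩ := by
    simp [Subtype.ext_iff, eq_comm]
  simp [Matrix.mul_apply, Cmat, hrow, ite_and, Finset.sum_ite_eq']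

theorem Cmat_mul_mul_conjTranspose_apply (σ τ : In N n) :
    (Cmat k * A * (Cmat k)ᴴ : Matrix (In N n) (In N n) ℂ) σ τ =
      star ((Cmat k * (Cmat k * A)ᴴ : Matrix (In N n) (In N n) ℂ) τ σ) := by
  rw [← Matrix.conjTranspose_apply, Matrix.conjTranspose_mul, Matrix.conjTranspose_conjTranspose]

theorem sum_Cmat_mul_mul_conjTranspose_apply_nil_left (h : ([] : Word N).length ≤ n)
    (τ : In N n) : (∑ k, Cmat k * A * (Cmat k)ᴴ : Matrix (In N n) (In N n) ℂ) ⟨[], h⟩ τ = 0 := by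
  simp [Matrix.sum_apply, Matrix.mul_apply (M := Cmat _ * A), Cmat_mul_apply_nil]

theorem sum_Cmat_mul_mul_conjTranspose_apply_nil_right (σ : In N n)
    (h : ([] : Word N).length ≤ n) :
    (∑ k, Cmat k * A * (Cmat k)ᴴ : Matrix (In N n) (In N n) ℂ) σ ⟨[], h⟩ = 0 := by
  simp [Matrix.sum_apply, Cmat_mul_mul_conjTranspose_apply, Cmat_mul_apply_nil]

theorem sum_Cmat_mul_mul_conjTranspose_apply_cons_cons {x y : Fin N} {xs ys : Word N}
    (hx : (x :: xs).length ≤ n) (hy : (y :: ys).length ≤ n) :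
    (∑ k, Cmat k * A * (Cmat k)ᴴ : Matrix (In N n) (In N n) ℂ) ⟨x :: xs, hx⟩ ⟨y :: ys, hy⟩ =
      if x = y then A ⟨xs, (Nat.le_succ _).trans hx⟩ ⟨ys, (Nat.le_succ _).trans hy⟩ else 0 := by
  simp only [Matrix.sum_apply, Cmat_mul_mul_conjTranspose_apply, Cmat_mul_apply_cons,
    Matrix.conjTranspose_apply, apply_ite star, star_star, star_zero]
  rw [Finset.sum_ite_eq', if_pos (Finset.mem_univ _)]
  simp only [eq_comm]

end Cmat

theorem truncated_multiToeplitz_displacement_general {N n : ℕ}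
    (K : Word N → Word N → ℂ) (hK : MultiToeplitz K) (hK1 : K [] [] = 1)
    (p q : In N n → ℂ)
    (hp0 : p ⟨[], Nat.zero_le n⟩ = 1)
    (hp : ∀ σ : In N n, σ.1 ≠ [] → p σ = (starRingEnd ℂ) (K [] σ.1))
    (hq0 : q ⟨[], Nat.zero_le n⟩ = 0)
    (hq : ∀ σ : In N n, σ.1 ≠ [] → q σ = (starRingEnd ℂ) (K [] σ.1)) :
    (Matrix.of fun σ τ : In N n => K σ.1 τ.1)
        - ∑ k : Fin N, Cmat k * (Matrix.of fun σ τ : In N n => K σ.1 τ.1) * (Cmat k)ᴴ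
      = Matrix.of fun σ τ : In N n =>
          p σ * (starRingEnd ℂ) (p τ) - q σ * (starRingEnd ℂ) (q τ) := by
  ext ⟨_ | ⟨x, xs⟩, hs⟩ ⟨_ | ⟨y, ys⟩, ht⟩ <;> simp only [Matrix.sub_apply, Matrix.of_apply]
  · rw [sum_Cmat_mul_mul_conjTranspose_apply_nil_left]
    simp [hp0, hq0, hK1]
  · rw [sum_Cmat_mul_mul_conjTranspose_apply_nil_left, hp ⟨y :: ys, ht⟩ (List.cons_ne_nil _ _),
      hq ⟨y :: ys, ht⟩ (List.cons_ne_nil _ _)]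
    simp [hp0, hq0]
  · rw [sum_Cmat_mul_mul_conjTranspose_apply_nil_right, hp ⟨x :: xs, hs⟩ (List.cons_ne_nil _ _),
      hq ⟨x :: xs, hs⟩ (List.cons_ne_nil _ _), hK.2.1.conj_apply_swap]
    simp [hp0, hq0]
  · rw [sum_Cmat_mul_mul_conjTranspose_apply_cons_cons, hp ⟨x :: xs, hs⟩ (List.cons_ne_nil _ _),
      hq ⟨x :: xs, hs⟩ (List.cons_ne_nil _ _), hp ⟨y :: ys, ht⟩ (List.cons_ne_nil _ _),
      hq ⟨y :: ys, ht⟩ (List.cons_ne_nil _ _), sub_self, Matrix.of_apply]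
    split_ifs with hxy
    · subst hxy
      exact sub_eq_zero.2 (hK.1 [x] xs ys)
    · rw [hK.apply_cons_cons_of_ne hxy, sub_zero]

/-- Displacement equation for the truncation `K_n` of a positive definite
multi-Toeplitz kernel `K` with `K(∅,∅) = 1`:
`K_n − ∑ₖ C_{k,n} K_n C_{k,n}ᴴ = [p(σ)·conj(p(τ)) − q(σ)·conj(q(τ))]_{σ,τ}`. -/
theorem truncated_multiToeplitz_displacement {N n : ℕ} (hN : 1 ≤ N) (hn : 1 ≤ n)
    (K : Word N → Word N → ℂ) (hK : MultiToeplitz K) (hK1 : K [] [] = 1)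
    (p q : In N n → ℂ)
    (hp0 : p ⟨[], Nat.zero_le n⟩ = 1)
    (hp : ∀ σ : In N n, σ.1 ≠ [] → p σ = (starRingEnd ℂ) (K [] σ.1))
    (hq0 : q ⟨[], Nat.zero_le n⟩ = 0)
    (hq : ∀ σ : In N n, σ.1 ≠ [] → q σ = (starRingEnd ℂ) (K [] σ.1)) :
    (Matrix.of fun σ τ : In N n => K σ.1 τ.1)
        - ∑ k : Fin N, Cmat k * (Matrix.of fun σ τ : In N n => K σ.1 τ.1) * (Cmat k)ᴴ
      = Matrix.of fun σ τ : In N n =>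
          p σ * (starRingEnd ℂ) (p τ) - q σ * (starRingEnd ℂ) (q τ) :=
  truncated_multiToeplitz_displacement_general K hK hK1 p q hp0 hp hq0 hq
end
end

section
/- Let E_1, E_2, G be complex Hilbert spaces, F_1,…,F_N ∈ B(G), U ∈ B(E_1,G), V ∈ B(E_2,G). For a word σ = i_1⋯i_k set F_σ = F_{i_1}∘⋯∘F_{i_k}, F_∅ = id. Assume: (a) for every g ∈ G the families (U* F_σ* g)_σ and (V* F_σ* g)_σ are square-summable and the induced maps U_∞ : G → ℓ²(F_N^+;E_1) and V_∞ : G → ℓ²(F_N^+;E_2) are bounded; (b) for every g ∈ G, Σ_{|σ|=k} ‖F_σ* g‖ → 0 as k → ∞. Then A_0 := U_∞* U_∞ − V_∞* V_∞ satisfies the displacement equation A_0 − Σ_{k=1}^N F_k A_0 F_k* = U U* − V V*, and A_0 is the unique bounded operator on G satisfying this equation. -/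
/-!
The map `Δ B = B - ∑ₖ F_k B F_k*` is linear, so it suffices to treat a single Gramian `W* W` of a
wave operator `W g = (U* F_σ* g)_σ`. Its quadratic form is `∑_σ ⟪U* F_σ* g, U* F_σ* h⟫`; splitting
off the empty word and grouping the other words by their first letter `k` turns this series into
`⟪g, U U* h⟫ + ∑ₖ ⟪F_k* g, W* W F_k* h⟫`, which is the displacement equation.

If `Δ D = 0`, iterating gives `⟪g, D h⟫ = ∑_{|σ| = m} ⟪F_σ* g, D F_σ* h⟫` for every `m`, and this is
at most `‖D‖ (∑_{|σ| = m} ‖F_σ* g‖) (∑_{|σ| = m} ‖F_σ* h‖) → 0`; hence `Δ` is injective.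
-/

noncomputable section

instance {N k : ℕ} : Fintype {σ : Word N // σ.length = k} :=
  (List.finite_length_eq (Fin N) k).fintype

open Filter Topology ContinuousLinearMap
open scoped InnerProductSpace

section Words

variable {ι : Type*}

-- For `ι = Fin N` this is the instance on `Word N` above, on the nose.
instance [Finite ι] (m : ℕ) : Fintype {σ : List ι // σ.length = m} :=
  (List.finite_length_eq ι m).fintype

def consLengthEquiv (ι : Type*) (m : ℕ) :
    ι × {σ : List ι // σ.length = m} ≃ {σ : List ι // σ.length = m + 1} where
  toFun p := ⟨p.1 :: p.2.1, by simp [p.2.2]⟩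
  invFun
    | ⟨k :: σ, h⟩ => (k, ⟨σ, by simpa using h⟩)
  left_inv _ := rfl
  right_inv
    | ⟨_ :: _, _⟩ => rfl

instance : Unique {σ : List ι // σ.length = 0} where
  default := ⟨[], rfl⟩
  uniq σ := Subtype.ext (List.length_eq_zero_iff.mp σ.2)

theorem sum_length_succ_eq_sum_cons [Fintype ι] {M : Type*} [AddCommMonoid M]
    (φ : List ι → M) (m : ℕ) :
    ∑ σ : {σ : List ι // σ.length = m + 1}, φ σ.1 =
      ∑ k : ι, ∑ σ : {σ : List ι // σ.length = m}, φ (k :: σ.1) := by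
  rw [← Fintype.sum_prod_type']
  exact (Fintype.sum_equiv (consLengthEquiv ι m) _ _ fun _ => rfl).symm

theorem tsum_eq_nil_add_sum_tsum_cons [Fintype ι] {M : Type*} [NormedAddCommGroup M]
    [CompleteSpace M] {f : List ι → M} (hf : Summable f) :
    ∑' σ, f σ = f [] + ∑ k : ι, ∑' σ, f (k :: σ) := by
  let e : Unit ⊕ ι × List ι ≃ List ι :=
    { toFun := Sum.elim (fun _ => []) fun p => p.1 :: p.2
      invFun := fun | [] => .inl () | k :: σ => .inr (k, σ)
      left_inv := fun | .inl () => rfl | .inr _ => rfl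
      right_inv := fun | [] => rfl | _ :: _ => rfl }
  have he : Summable fun x => f (e x) := e.summable_iff.mpr hf
  have hcons : Summable fun p : ι × List ι => f (p.1 :: p.2) :=
    he.comp_injective Sum.inr_injective
  rw [← e.tsum_eq, Summable.tsum_sum (he.comp_injective Sum.inl_injective) hcons]
  change ∑' _ : Unit, f [] + ∑' p : ι × List ι, f (p.1 :: p.2) = _
  rw [hcons.tsum_prod' fun k => hcons.comp_injective (Prod.mk_right_injective k),
    tsum_fintype, tsum_fintype, Fintype.sum_unique]

end Words

section Displacement

variable {𝕜 ι G : Type*} [RCLike 𝕜]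
  [NormedAddCommGroup G] [InnerProductSpace 𝕜 G] [CompleteSpace G]

theorem adjoint_prod_map_cons (F : ι → G →L[𝕜] G) (k : ι) (σ : List ι) :
    adjoint ((k :: σ).map F).prod = adjoint (σ.map F).prod ∘L adjoint (F k) := by
  rw [List.map_cons, List.prod_cons, mul_def, adjoint_comp]

variable [Fintype ι]

def displacement (F : ι → G →L[𝕜] G) : (G →L[𝕜] G) →ₗ[𝕜] (G →L[𝕜] G) where
  toFun B := B - ∑ k, F k ∘L (B ∘L adjoint (F k))
  map_add' B C := by
    simp only [add_comp, comp_add, Finset.sum_add_distrib]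
    abel
  map_smul' c B := by simp [smul_sub, Finset.smul_sum]

theorem displacement_apply (F : ι → G →L[𝕜] G) (B : G →L[𝕜] G) :
    displacement F B = B - ∑ k, F k ∘L (B ∘L adjoint (F k)) := rfl

theorem inner_displacement_apply (F : ι → G →L[𝕜] G) (B : G →L[𝕜] G) (g h : G) :
    ⟪g, displacement F B h⟫_𝕜 = ⟪g, B h⟫_𝕜 - ∑ k, ⟪adjoint (F k) g, B (adjoint (F k) h)⟫_𝕜 := by
  simp [displacement_apply, inner_sub_right, inner_sum, adjoint_inner_left]

theorem displacement_adjoint_comp_self {E : Type*} [NormedAddCommGroup E] [InnerProductSpace 𝕜 E]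
    [CompleteSpace E] (F : ι → G →L[𝕜] G) (U : E →L[𝕜] G)
    (W : G →L[𝕜] lp (fun _ : List ι => E) 2)
    (hW : ∀ g σ, W g σ = adjoint U (adjoint (σ.map F).prod g)) :
    displacement F (adjoint W ∘L W) = U ∘L adjoint U := by
  set a : G → G → List ι → 𝕜 := fun g h σ =>
    ⟪adjoint U (adjoint (σ.map F).prod g), adjoint U (adjoint (σ.map F).prod h)⟫_𝕜
  have gram (g h : G) : ⟪g, (adjoint W ∘L W) h⟫_𝕜 = ∑' σ, a g h σ := by
    simp [a, adjoint_inner_right, lp.inner_eq_tsum, hW]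
  have summable (g h : G) : Summable (a g h) := by
    simpa [a, hW] using lp.summable_inner (W g) (W h)
  have shift (g h : G) (k : ι) (σ : List ι) :
      a (adjoint (F k) g) (adjoint (F k) h) σ = a g h (k :: σ) := by
    simp only [a, adjoint_prod_map_cons, comp_apply]
  ext h
  refine ext_inner_left 𝕜 fun g => ?_
  rw [inner_displacement_apply, gram, tsum_eq_nil_add_sum_tsum_cons (summable g h)]
  simp only [gram, shift, add_sub_cancel_right]
  simp [a, adjoint_one, adjoint_inner_left]

theorem inner_eq_sum_length_of_displacement_eq_zero {F : ι → G →L[𝕜] G} {D : G →L[𝕜] G}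
    (hD : displacement F D = 0) (m : ℕ) (g h : G) :
    ⟪g, D h⟫_𝕜 = ∑ σ : {σ : List ι // σ.length = m},
      ⟪adjoint (σ.1.map F).prod g, D (adjoint (σ.1.map F).prod h)⟫_𝕜 := by
  induction m generalizing g h with
  | zero =>
    rw [Fintype.sum_unique]
    change ⟪g, D h⟫_𝕜 = ⟪adjoint ([].map F).prod g, D (adjoint ([].map F).prod h)⟫_𝕜
    simp [adjoint_one]
  | succ m ih =>
    have step := inner_displacement_apply F D g h
    rw [hD, zero_apply, inner_zero_right, eq_comm, sub_eq_zero] at step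
    rw [step, sum_length_succ_eq_sum_cons
      (fun τ => ⟪adjoint (τ.map F).prod g, D (adjoint (τ.map F).prod h)⟫_𝕜)]
    refine Finset.sum_congr rfl fun k _ => ?_
    rw [ih]
    simp only [adjoint_prod_map_cons, comp_apply]

omit [CompleteSpace G] in
theorem norm_sum_inner_apply_le {α : Type*} (s : Finset α) (D : G →L[𝕜] G) (x y : α → G) :
    ‖∑ σ ∈ s, ⟪x σ, D (y σ)⟫_𝕜‖ ≤ (∑ σ ∈ s, ‖x σ‖) * (‖D‖ * ∑ σ ∈ s, ‖y σ‖) := by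
  rw [Finset.sum_mul]
  refine (norm_sum_le _ _).trans (Finset.sum_le_sum fun σ hσ => ?_)
  calc ‖⟪x σ, D (y σ)⟫_𝕜‖ ≤ ‖x σ‖ * (‖D‖ * ‖y σ‖) :=
        (norm_inner_le_norm _ _).trans (by gcongr; exact D.le_opNorm _)
    _ ≤ ‖x σ‖ * (‖D‖ * ∑ σ ∈ s, ‖y σ‖) := by
        gcongr
        exact Finset.single_le_sum (fun _ _ => norm_nonneg _) hσ

theorem eq_zero_of_displacement_eq_zero {F : ι → G →L[𝕜] G}
    (hF : ∀ g : G, Tendsto (fun m : ℕ => ∑ σ : {σ : List ι // σ.length = m},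
      ‖adjoint (σ.1.map F).prod g‖) atTop (𝓝 0))
    {D : G →L[𝕜] G} (hD : displacement F D = 0) : D = 0 := by
  ext h
  refine ext_inner_left 𝕜 fun g => ?_
  have bound (m : ℕ) : ‖⟪g, D h⟫_𝕜‖ ≤ (∑ σ : {σ : List ι // σ.length = m},
      ‖adjoint (σ.1.map F).prod g‖) * (‖D‖ * ∑ σ : {σ : List ι // σ.length = m},
      ‖adjoint (σ.1.map F).prod h‖) := by
    rw [inner_eq_sum_length_of_displacement_eq_zero hD m]
    exact norm_sum_inner_apply_le _ _ _ _
  have lim := (hF g).mul ((hF h).const_mul ‖D‖)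
  rw [mul_zero, mul_zero] at lim
  simpa using ge_of_tendsto' lim bound

end Displacement

theorem wave_displacement_unique_general {N : ℕ}
    {E₁ E₂ G : Type*} [NormedAddCommGroup E₁] [InnerProductSpace ℂ E₁] [CompleteSpace E₁]
    [NormedAddCommGroup E₂] [InnerProductSpace ℂ E₂] [CompleteSpace E₂]
    [NormedAddCommGroup G] [InnerProductSpace ℂ G] [CompleteSpace G]
    (F : Fin N → G →L[ℂ] G)
    (U : E₁ →L[ℂ] G) (V : E₂ →L[ℂ] G)
    (Uinf : G →L[ℂ] lp (fun _ : Word N => E₁) 2)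
    (Vinf : G →L[ℂ] lp (fun _ : Word N => E₂) 2)
    (hU : ∀ (g : G) (σ : Word N),
      (Uinf g) σ =
        ContinuousLinearMap.adjoint U (ContinuousLinearMap.adjoint ((σ.map F).prod) g))
    (hV : ∀ (g : G) (σ : Word N),
      (Vinf g) σ =
        ContinuousLinearMap.adjoint V (ContinuousLinearMap.adjoint ((σ.map F).prod) g))
    (hlim : ∀ g : G,
      Filter.Tendsto
        (fun k : ℕ => ∑ σ : {σ : Word N // σ.length = k},
          ‖ContinuousLinearMap.adjoint ((σ.1.map F).prod) g‖)
        Filter.atTop (nhds 0)) :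
    ((ContinuousLinearMap.adjoint Uinf ∘L Uinf - ContinuousLinearMap.adjoint Vinf ∘L Vinf)
        - ∑ k : Fin N, F k ∘L
            ((ContinuousLinearMap.adjoint Uinf ∘L Uinf
                - ContinuousLinearMap.adjoint Vinf ∘L Vinf)
              ∘L ContinuousLinearMap.adjoint (F k))
      = U ∘L ContinuousLinearMap.adjoint U - V ∘L ContinuousLinearMap.adjoint V) ∧
    (∀ B : G →L[ℂ] G,
      (B - ∑ k : Fin N, F k ∘L (B ∘L ContinuousLinearMap.adjoint (F k))
          = U ∘L ContinuousLinearMap.adjoint U - V ∘L ContinuousLinearMap.adjoint V) →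
      B = ContinuousLinearMap.adjoint Uinf ∘L Uinf
            - ContinuousLinearMap.adjoint Vinf ∘L Vinf) := by
  have hA₀ : displacement F (adjoint Uinf ∘L Uinf - adjoint Vinf ∘L Vinf) =
      U ∘L adjoint U - V ∘L adjoint V := by
    rw [map_sub, displacement_adjoint_comp_self F U Uinf hU,
      displacement_adjoint_comp_self F V Vinf hV]
  refine ⟨hA₀, fun B hB => sub_eq_zero.mp (eq_zero_of_displacement_eq_zero hlim ?_)⟩
  rw [map_sub, hA₀, displacement_apply, hB, sub_self]

/-- The operator `A₀ = U_∞* U_∞ − V_∞* V_∞` satisfies the displacement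
equation `A₀ − ∑ₖ F_k A₀ F_k* = U U* − V V*` and is the unique bounded operator on `G`
satisfying it. -/
theorem wave_displacement_unique {N : ℕ} (hN : 1 ≤ N)
    {E₁ E₂ G : Type*} [NormedAddCommGroup E₁] [InnerProductSpace ℂ E₁] [CompleteSpace E₁]
    [NormedAddCommGroup E₂] [InnerProductSpace ℂ E₂] [CompleteSpace E₂]
    [NormedAddCommGroup G] [InnerProductSpace ℂ G] [CompleteSpace G]
    (F : Fin N → G →L[ℂ] G)
    (U : E₁ →L[ℂ] G) (V : E₂ →L[ℂ] G)
    (Uinf : G →L[ℂ] lp (fun _ : Word N => E₁) 2)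
    (Vinf : G →L[ℂ] lp (fun _ : Word N => E₂) 2)
    (hU : ∀ (g : G) (σ : Word N),
      (Uinf g) σ =
        ContinuousLinearMap.adjoint U (ContinuousLinearMap.adjoint ((σ.map F).prod) g))
    (hV : ∀ (g : G) (σ : Word N),
      (Vinf g) σ =
        ContinuousLinearMap.adjoint V (ContinuousLinearMap.adjoint ((σ.map F).prod) g))
    (hlim : ∀ g : G,
      Filter.Tendsto
        (fun k : ℕ => ∑ σ : {σ : Word N // σ.length = k},
          ‖ContinuousLinearMap.adjoint ((σ.1.map F).prod) g‖)
        Filter.atTop (nhds 0)) :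
    ((ContinuousLinearMap.adjoint Uinf ∘L Uinf - ContinuousLinearMap.adjoint Vinf ∘L Vinf)
        - ∑ k : Fin N, F k ∘L
            ((ContinuousLinearMap.adjoint Uinf ∘L Uinf
                - ContinuousLinearMap.adjoint Vinf ∘L Vinf)
              ∘L ContinuousLinearMap.adjoint (F k))
      = U ∘L ContinuousLinearMap.adjoint U - V ∘L ContinuousLinearMap.adjoint V) ∧
    (∀ B : G →L[ℂ] G,
      (B - ∑ k : Fin N, F k ∘L (B ∘L ContinuousLinearMap.adjoint (F k))
          = U ∘L ContinuousLinearMap.adjoint U - V ∘L ContinuousLinearMap.adjoint V) →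
      B = ContinuousLinearMap.adjoint Uinf ∘L Uinf
            - ContinuousLinearMap.adjoint Vinf ∘L Vinf) :=
  wave_displacement_unique_general F U V Uinf Vinf hU hV hlim
end
end

section
/- For j = 1,…,N let C_j^- be the bounded operator on ℓ²(F_N^+) determined by C_j^- e_{σj} = e_σ for every word σ (where σj is σ with the letter j appended) and C_j^- e_τ = 0 for every word τ not ending in the letter j. Let Φ : TensorAlgebra ℂ ℂ^N → B(ℓ²(F_N^+)) be the unique ℂ-algebra homomorphism determined by sending the canonical image of the j-th standard basis vector e_j of ℂ^N to C_j^-. Then Φ is injective, and its range equals the set of bounded structured upper triangular operators T on ℓ²(F_N^+) whose first row is finitely supported, i.e. {τ ∈ F_N^+ : T(∅,τ) ≠ 0} is finite. -/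
open scoped ComplexOrder

noncomputable section

namespace SUTaux

variable {N : ℕ}

/-- monomial in the tensor algebra corresponding to a word -/
def m (w : Word N) : TensorAlgebra ℂ (EuclideanSpace ℂ (Fin N)) :=
  (w.map fun j => TensorAlgebra.ι ℂ (EuclideanSpace.single j (1 : ℂ))).prod

lemma m_nil : m ([] : Word N) = 1 := rfl

lemma m_cons (j : Fin N) (w : Word N) :
    m (j :: w) = TensorAlgebra.ι ℂ (EuclideanSpace.single j (1 : ℂ)) * m w := by
  simp [m]

lemma m_append (w w' : Word N) : m (w ++ w') = m w * m w' := by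
  simp [m]

lemma span_m : Submodule.span ℂ (Set.range (m (N := N))) = ⊤ := by
  rw [Submodule.eq_top_iff']
  set P := Submodule.span ℂ (Set.range (m (N := N))) with hP
  have hmem : ∀ w : Word N, m w ∈ P := fun w => Submodule.subset_span ⟨w, rfl⟩
  have hmul : ∀ x y : TensorAlgebra ℂ (EuclideanSpace ℂ (Fin N)),
      x ∈ P → y ∈ P → x * y ∈ P := by
    intro x y hx hy
    induction hx, hy using Submodule.span_induction₂ with
    | mem_mem u v hu hv =>
      obtain ⟨w, rfl⟩ := hu
      obtain ⟨w', rfl⟩ := hv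
      rw [← m_append]; exact hmem _
    | zero_left v hv => simp
    | zero_right u hu => simp
    | add_left u₁ u₂ v _ _ _ h1 h2 => rw [add_mul]; exact P.add_mem h1 h2
    | add_right u v₁ v₂ _ _ _ h1 h2 => rw [mul_add]; exact P.add_mem h1 h2
    | smul_left r u v _ _ h => rw [smul_mul_assoc]; exact P.smul_mem r h
    | smul_right r u v _ _ h => rw [mul_smul_comm]; exact P.smul_mem r h
  intro x
  induction x using TensorAlgebra.induction with
  | algebraMap r =>
    have : (algebraMap ℂ _ r : TensorAlgebra ℂ (EuclideanSpace ℂ (Fin N))) = r • m [] := by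
      rw [m_nil, Algebra.algebraMap_eq_smul_one]
    rw [this]; exact P.smul_mem r (hmem [])
  | ι v =>
    have hv := (EuclideanSpace.basisFun (Fin N) ℂ).sum_repr v
    simp only [EuclideanSpace.basisFun_repr, EuclideanSpace.basisFun_apply] at hv
    rw [← hv, map_sum]
    refine Submodule.sum_mem _ fun j _ => ?_
    rw [map_smul]
    refine P.smul_mem _ ?_
    have : TensorAlgebra.ι ℂ (EuclideanSpace.single j (1 : ℂ)) = m [j] := by
      simp [m]
    rw [this]; exact hmem _
  | mul x y hx hy => exact hmul x y hx hy
  | add x y hx hy => exact P.add_mem hx hy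

end SUTaux
section OpAux

variable {N : ℕ} {Cm : Fin N → (H2 N →L[ℂ] H2 N)}
  {Φ : TensorAlgebra ℂ (EuclideanSpace ℂ (Fin N)) →ₐ[ℂ] (H2 N →L[ℂ] H2 N)}
  (hΦ : ∀ j : Fin N, Φ (TensorAlgebra.ι ℂ (EuclideanSpace.single j (1 : ℂ))) = Cm j)

include hΦ

lemma S_cons (j : Fin N) (w : Word N) (f : H2 N) :
    Φ (SUTaux.m (j :: w)) f = Cm j (Φ (SUTaux.m w) f) := by
  rw [SUTaux.m_cons, map_mul, hΦ]
  rfl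

lemma S_append (hCm1 : ∀ (j : Fin N) (σ : Word N), Cm j (eb (σ ++ [j])) = eb σ)
    (w σ : Word N) : Φ (SUTaux.m w) (eb (σ ++ w)) = eb σ := by
  induction w generalizing σ with
  | nil => rw [SUTaux.m_nil, map_one, List.append_nil]; rfl
  | cons j w ih =>
    rw [S_cons hΦ]
    have h1 : σ ++ j :: w = (σ ++ [j]) ++ w := by simp
    rw [h1, ih, hCm1]

lemma S_zero (hCm1 : ∀ (j : Fin N) (σ : Word N), Cm j (eb (σ ++ [j])) = eb σ)
    (hCm2 : ∀ (j : Fin N) (τ : Word N),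
      (∀ σ : Word N, τ ≠ σ ++ [j]) → Cm j (eb τ) = 0)
    (w τ : Word N) (h : ∀ σ : Word N, τ ≠ σ ++ w) : Φ (SUTaux.m w) (eb τ) = 0 := by
  induction w generalizing τ with
  | nil => exact absurd (List.append_nil τ).symm (h τ)
  | cons j w ih =>
    rw [S_cons hΦ]
    by_cases hτ : ∃ ρ : Word N, τ = ρ ++ w
    · obtain ⟨ρ, rfl⟩ := hτ
      rw [S_append hΦ hCm1, hCm2]
      intro σ hσ
      refine h σ ?_
      rw [hσ]; simp
    · push_neg at hτ
      rw [ih τ hτ, map_zero]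

lemma entry_S (hCm1 : ∀ (j : Fin N) (σ : Word N), Cm j (eb (σ ++ [j])) = eb σ)
    (hCm2 : ∀ (j : Fin N) (τ : Word N),
      (∀ σ : Word N, τ ≠ σ ++ [j]) → Cm j (eb τ) = 0)
    (w σ τ : Word N) :
    entry (Φ (SUTaux.m w)) σ τ = if τ = σ ++ w then 1 else 0 := by
  unfold entry
  split_ifs with h
  · subst h
    rw [S_append hΦ hCm1, eb, lp.single_apply_self]
  · by_cases hτ : ∃ ρ : Word N, τ = ρ ++ w
    · obtain ⟨ρ, rfl⟩ := hτ
      rw [S_append hΦ hCm1, eb]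
      refine lp.single_apply_ne 2 ρ _ ?_
      intro hσρ
      exact h (by rw [hσρ])
    · push_neg at hτ
      rw [S_zero hΦ hCm1 hCm2 w τ hτ]
      rfl

end OpAux
section ExtAux
variable {N : ℕ}

set_option synthInstance.maxHeartbeats 1000000 in
lemma eb_ext {T T' : H2 N →L[ℂ] H2 N} (h : ∀ τ : Word N, T (eb τ) = T' (eb τ)) :
    T = T' := by
  ext f
  have hf : HasSum (fun τ : Word N => lp.single 2 τ (f τ)) f :=
    lp.hasSum_single (by norm_num) f
  have key : ∀ (S : H2 N →L[ℂ] H2 N) (τ : Word N),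
      S (lp.single 2 τ (f τ)) = f τ • S (eb τ) := by
    intro S τ
    have h1 : lp.single 2 τ (f τ) = f τ • eb τ := by
      rw [eb, ← lp.single_smul, smul_eq_mul, mul_one]
    rw [h1, map_smul]
  have h1 : HasSum (fun τ : Word N => T (lp.single 2 τ (f τ))) (T f) := hf.mapL T
  have h2 : HasSum (fun τ : Word N => T (lp.single 2 τ (f τ))) (T' f) := by
    have := hf.mapL T'
    refine HasSum.congr_fun this fun τ => ?_
    rw [key T, key T', h]
  rw [h1.unique h2]

lemma entry_ext {T T' : H2 N →L[ℂ] H2 N}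
    (h : ∀ σ τ : Word N, entry T σ τ = entry T' σ τ) : T = T' :=
  eb_ext fun τ => lp.ext (funext fun σ => h σ τ)

lemma entry_zero (σ τ : Word N) : entry (0 : H2 N →L[ℂ] H2 N) σ τ = 0 := rfl

/-- entry of a finsupp linear combination of operators -/
lemma entry_finsupp_sum (c : Word N →₀ ℂ) (S : Word N → (H2 N →L[ℂ] H2 N))
    (σ τ : Word N) :
    entry (c.sum fun w a => a • S w) σ τ = ∑ w ∈ c.support, c w * entry (S w) σ τ := by
  unfold entry
  rw [Finsupp.sum, ContinuousLinearMap.sum_apply, lp.coeFn_sum, Finset.sum_apply]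
  refine Finset.sum_congr rfl fun w _ => ?_
  rw [ContinuousLinearMap.smul_apply, lp.coeFn_smul, Pi.smul_apply, smul_eq_mul]

lemma isSUT_entry {T : H2 N →L[ℂ] H2 N} (hT : IsSUT T) (σ τ : Word N) :
    entry T σ τ = if σ <+: τ then entry T [] (τ.drop σ.length) else 0 := by
  induction σ generalizing τ with
  | nil => simp
  | cons a σ ih =>
    cases τ with
    | nil =>
      rw [if_neg (by simp), hT.2]
      simp
    | cons b τ =>
      rw [hT.1]
      by_cases hab : a = b
      · subst hab
        rw [if_pos rfl, ih]
        have : (a :: σ) <+: (a :: τ) ↔ σ <+: τ := by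
          simp [List.cons_prefix_cons]
        by_cases hp : σ <+: τ
        · rw [if_pos hp, if_pos (this.mpr hp)]
          rfl
        · rw [if_neg hp, if_neg (fun hc => hp (this.mp hc))]
      · rw [if_neg hab, if_neg (fun hc => hab (List.cons_prefix_cons.mp hc).1)]

end ExtAux
section Main
variable {N : ℕ}

lemma isSUT_of_entry_eq {T : H2 N →L[ℂ] H2 N} (c : Word N →₀ ℂ)
    (h : ∀ σ τ : Word N, entry T σ τ = if σ <+: τ then c (τ.drop σ.length) else 0) :
    IsSUT T := by
  constructor
  · intro a b σ τ
    rw [h, h]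
    by_cases hab : a = b
    · subst hab
      rw [if_pos rfl]
      by_cases hp : σ <+: τ
      · rw [if_pos hp, if_pos (List.cons_prefix_cons.mpr ⟨rfl, hp⟩)]
        simp
      · rw [if_neg hp, if_neg (fun hc => hp (List.cons_prefix_cons.mp hc).2)]
    · rw [if_neg hab, if_neg (fun hc => hab (List.cons_prefix_cons.mp hc).1)]
  · intro σ τ hlen
    rw [h, if_neg (fun hc => absurd hc.length_le (not_le.mpr hlen))]

variable {Cm : Fin N → (H2 N →L[ℂ] H2 N)}
  {Φ : TensorAlgebra ℂ (EuclideanSpace ℂ (Fin N)) →ₐ[ℂ] (H2 N →L[ℂ] H2 N)}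
  (hΦ : ∀ j : Fin N, Φ (TensorAlgebra.ι ℂ (EuclideanSpace.single j (1 : ℂ))) = Cm j)
  (hCm1 : ∀ (j : Fin N) (σ : Word N), Cm j (eb (σ ++ [j])) = eb σ)
  (hCm2 : ∀ (j : Fin N) (τ : Word N), (∀ σ : Word N, τ ≠ σ ++ [j]) → Cm j (eb τ) = 0)

include hΦ hCm1 hCm2

lemma entry_comb (c : Word N →₀ ℂ) (σ τ : Word N) :
    entry (Φ (c.sum fun w a => a • SUTaux.m w)) σ τ =
      if σ <+: τ then c (τ.drop σ.length) else 0 := by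
  classical
  have hmap : Φ (c.sum fun w a => a • SUTaux.m w)
      = c.sum fun w a => a • Φ (SUTaux.m w) := by
    rw [map_finsuppSum]
    exact Finsupp.sum_congr fun w _ => map_smul Φ _ _
  rw [hmap, entry_finsupp_sum]
  simp only [entry_S hΦ hCm1 hCm2]
  by_cases h : σ <+: τ
  · obtain ⟨w0, rfl⟩ := h
    rw [if_pos ⟨w0, rfl⟩, List.drop_left]
    have hsum : ∀ w ∈ c.support,
        c w * (if σ ++ w0 = σ ++ w then 1 else 0) = if w0 = w then c w else 0 := by
      intro w _
      by_cases hw : w0 = w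
      · subst hw; simp
      · rw [if_neg hw, if_neg (fun hc => hw (List.append_cancel_left hc)), mul_zero]
    rw [Finset.sum_congr rfl hsum, Finset.sum_ite_eq]
    by_cases hw0 : w0 ∈ c.support
    · rw [if_pos hw0]
    · rw [if_neg hw0, eq_comm, Finsupp.notMem_support_iff.mp hw0]
  · rw [if_neg h]
    refine Finset.sum_eq_zero fun w _ => ?_
    rw [if_neg (fun hc => h ⟨w, hc.symm⟩), mul_zero]

end Main

/-- The algebra homomorphism `Φ` from the tensor algebra of `ℂ^N` sending the
`j`-th standard basis vector to `C_j⁻` is injective, and its range is exactly the set of bounded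
structured upper triangular operators with finitely supported first row. -/
theorem tensorAlgebra_representation {N : ℕ} (hN : 1 ≤ N)
    (Cm : Fin N → (H2 N →L[ℂ] H2 N))
    (hCm1 : ∀ (j : Fin N) (σ : Word N), Cm j (eb (σ ++ [j])) = eb σ)
    (hCm2 : ∀ (j : Fin N) (τ : Word N), (∀ σ : Word N, τ ≠ σ ++ [j]) → Cm j (eb τ) = 0)
    (Φ : TensorAlgebra ℂ (EuclideanSpace ℂ (Fin N)) →ₐ[ℂ] (H2 N →L[ℂ] H2 N))
    (hΦ : ∀ j : Fin N, Φ (TensorAlgebra.ι ℂ (EuclideanSpace.single j (1 : ℂ))) = Cm j) :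
    Function.Injective Φ ∧
      Set.range Φ =
        {T : H2 N →L[ℂ] H2 N | IsSUT T ∧ {τ : Word N | entry T [] τ ≠ 0}.Finite} := by
  classical
  have hspan : ∀ x : TensorAlgebra ℂ (EuclideanSpace ℂ (Fin N)),
      ∃ c : Word N →₀ ℂ, x = c.sum fun w a => a • SUTaux.m w := by
    intro x
    have hx : x ∈ Submodule.span ℂ (Set.range (SUTaux.m (N := N))) := by
      rw [SUTaux.span_m]; trivial
    obtain ⟨c, hc⟩ := Finsupp.mem_span_range_iff_exists_finsupp.mp hx
    exact ⟨c, hc.symm⟩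
  constructor
  · rw [injective_iff_map_eq_zero]
    intro x hx
    obtain ⟨c, rfl⟩ := hspan x
    have hc0 : c = 0 := by
      ext w
      have h1 := entry_comb hΦ hCm1 hCm2 c [] w
      rw [hx, entry_zero] at h1
      simpa using h1.symm
    rw [hc0, Finsupp.sum_zero_index]
  · ext T
    simp only [Set.mem_range, Set.mem_setOf_eq]
    constructor
    · rintro ⟨x, rfl⟩
      obtain ⟨c, rfl⟩ := hspan x
      have hform := entry_comb hΦ hCm1 hCm2 c
      refine ⟨isSUT_of_entry_eq c hform, ?_⟩
      refine c.support.finite_toSet.subset fun τ hτ => ?_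
      simp only [Set.mem_setOf_eq] at hτ
      rw [hform] at hτ
      rw [if_pos List.nil_prefix] at hτ
      simpa using hτ
    · rintro ⟨hsut, hfin⟩
      have hmem : ∀ w : Word N, w ∈ hfin.toFinset ↔ entry T [] w ≠ 0 := by
        intro w; rw [Set.Finite.mem_toFinset]; rfl
      set c : Word N →₀ ℂ := ⟨hfin.toFinset, fun w => entry T [] w, hmem⟩ with hcdef
      refine ⟨c.sum fun w a => a • SUTaux.m w, ?_⟩
      refine entry_ext fun σ τ => ?_
      rw [entry_comb hΦ hCm1 hCm2, isSUT_entry hsut]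
      split_ifs with h
      · rfl
      · rfl
end
end

section
/- Let T be a bounded structured upper triangular operator on ℓ²(F_N^+) whose first row is finitely supported ({τ : T(∅,τ) ≠ 0} is finite). Then T = Σ_{σ ∈ F_N^+} T(∅,σ) · C_σ^-, a finite sum, where for σ = i_1⋯i_k the operator C_σ^- = C_{i_1}^- ∘ C_{i_2}^- ∘ ⋯ ∘ C_{i_k}^- and C_∅^- = id. -/
open scoped ComplexOrder

noncomputable section

section Aux

variable {N : ℕ} (Cm : Fin N → (H2 N →L[ℂ] H2 N))
  (hCm1 : ∀ (j : Fin N) (σ : Word N), Cm j (eb (σ ++ [j])) = eb σ)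
  (hCm2 : ∀ (j : Fin N) (τ : Word N), (∀ σ : Word N, τ ≠ σ ++ [j]) → Cm j (eb τ) = 0)

include hCm1 in
/-- `C_σ⁻ e_{πσ} = e_π`. -/
lemma prod_eb1 : ∀ (σ π : Word N), ((σ.map Cm).prod) (eb (π ++ σ)) = eb π := by
  intro σ
  induction σ with
  | nil => intro π; simp
  | cons i σ' ih =>
    intro π
    have : ((i :: σ').map Cm).prod = Cm i * (σ'.map Cm).prod := by simp
    rw [this, ContinuousLinearMap.mul_apply]
    have h1 : π ++ i :: σ' = (π ++ [i]) ++ σ' := by simp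
    rw [h1, ih (π ++ [i]), hCm1]

include hCm1 hCm2 in
/-- `C_σ⁻ e_τ = 0` when `σ` is not a suffix of `τ`. -/
lemma prod_eb2 : ∀ (σ τ : Word N), (¬ ∃ π : Word N, τ = π ++ σ) →
    ((σ.map Cm).prod) (eb τ) = 0 := by
  intro σ
  induction σ with
  | nil => intro τ h; exact absurd ⟨τ, by simp⟩ h
  | cons i σ' ih =>
    intro τ h
    have hm : ((i :: σ').map Cm).prod = Cm i * (σ'.map Cm).prod := by simp
    rw [hm, ContinuousLinearMap.mul_apply]
    by_cases h' : ∃ π : Word N, τ = π ++ σ'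
    · obtain ⟨π', hπ'⟩ := h'
      rw [hπ', prod_eb1 Cm hCm1]
      refine hCm2 i π' fun ρ hρ => ?_
      exact h ⟨ρ, by simp [hπ', hρ]⟩
    · rw [ih τ h', map_zero]

include hCm1 hCm2 in
/-- Coordinate of `C_σ⁻ e_τ`. -/
lemma prod_eb_coord (σ τ π : Word N) :
    (((σ.map Cm).prod) (eb τ) : ∀ _ : Word N, ℂ) π = if τ = π ++ σ then 1 else 0 := by
  by_cases h : ∃ ρ : Word N, τ = ρ ++ σ
  · obtain ⟨ρ, hρ⟩ := h
    rw [hρ, prod_eb1 Cm hCm1]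
    by_cases hπ : π = ρ
    · subst hπ
      rw [if_pos rfl]
      exact lp.single_apply_self 2 π 1
    · rw [if_neg (fun hc => hπ (List.append_cancel_right hc).symm)]
      exact lp.single_apply_ne 2 ρ 1 hπ
  · rw [prod_eb2 Cm hCm1 hCm2 σ τ h, if_neg (fun hc => h ⟨π, hc⟩)]
    rfl

end Aux

section SUT

variable {N : ℕ} (T : H2 N →L[ℂ] H2 N) (hT : IsSUT T)

include hT in
lemma sut_entry1 : ∀ (π ρ : Word N), entry T π (π ++ ρ) = entry T [] ρ := by
  intro π
  induction π with
  | nil => intro ρ; rfl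
  | cons a π' ih =>
    intro ρ
    have := hT.1 a a π' (π' ++ ρ)
    simpa [ih ρ] using this

include hT in
lemma sut_entry2 : ∀ (π τ : Word N), (¬ ∃ ρ : Word N, τ = π ++ ρ) → entry T π τ = 0 := by
  intro π
  induction π with
  | nil => intro τ h; exact absurd ⟨τ, rfl⟩ h
  | cons a π' ih =>
    intro τ h
    cases τ with
    | nil => exact hT.2 _ _ (by simp)
    | cons b τ' =>
      rw [hT.1 a b π' τ']
      by_cases hab : a = b
      · subst hab
        rw [if_pos rfl]
        exact ih τ' fun ⟨ρ, hρ⟩ => h ⟨ρ, by simp [hρ]⟩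
      · rw [if_neg hab]

end SUT

set_option maxHeartbeats 1000000 in
set_option synthInstance.maxHeartbeats 400000 in
/-- A bounded structured upper triangular operator with finitely supported
first row is the finite sum `T = ∑_σ T(∅,σ) • C_σ⁻`, where `C_σ⁻ = C_{i₁}⁻ ∘ ⋯ ∘ C_{i_k}⁻`
for `σ = i₁⋯i_k` and `C_∅⁻ = id`. -/
theorem finite_first_row_sum {N : ℕ} (hN : 1 ≤ N)
    (Cm : Fin N → (H2 N →L[ℂ] H2 N))
    (hCm1 : ∀ (j : Fin N) (σ : Word N), Cm j (eb (σ ++ [j])) = eb σ)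
    (hCm2 : ∀ (j : Fin N) (τ : Word N), (∀ σ : Word N, τ ≠ σ ++ [j]) → Cm j (eb τ) = 0)
    (T : H2 N →L[ℂ] H2 N) (hT : IsSUT T)
    (hfin : {τ : Word N | entry T [] τ ≠ 0}.Finite) :
    T = ∑ σ ∈ hfin.toFinset, entry T [] σ • (σ.map Cm).prod := by
  classical
  set b : HilbertBasis (Word N) ℂ (H2 N) := default with hb
  have hbeq : ∀ i : Word N, b i = eb i := by
    intro i
    rw [← b.repr_symm_single i]
    have h : b.repr = LinearIsometryEquiv.refl ℂ (H2 N) := rfl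
    rw [h]
    rfl
  have hdense : Dense ((Submodule.span ℂ (Set.range (eb : Word N → H2 N)) : Submodule ℂ (H2 N))
      : Set (H2 N)) := by
    have h1 := b.dense_span
    have hr : Set.range (⇑b) = Set.range (eb : Word N → H2 N) := by
      ext x; constructor
      · rintro ⟨i, rfl⟩; exact ⟨i, (hbeq i).symm⟩
      · rintro ⟨i, rfl⟩; exact ⟨i, hbeq i⟩
    rw [hr] at h1
    exact Submodule.dense_iff_topologicalClosure_eq_top.mpr h1
  refine ContinuousLinearMap.ext_on hdense ?_
  rintro x ⟨τ, rfl⟩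
  apply lp.ext
  funext π
  have hsum : ((∑ σ ∈ hfin.toFinset, entry T [] σ • (σ.map Cm).prod) (eb τ))
      = ∑ σ ∈ hfin.toFinset, entry T [] σ • (((σ.map Cm).prod) (eb τ)) := by
    simp [ContinuousLinearMap.sum_apply]
  rw [hsum, lp.coeFn_sum]
  have hterm : ∀ σ ∈ hfin.toFinset,
      ((entry T [] σ • (((σ.map Cm).prod) (eb τ)) : H2 N) : ∀ _ : Word N, ℂ) π
        = entry T [] σ * (if τ = π ++ σ then 1 else 0) := by
    intro σ _
    rw [lp.coeFn_smul, Pi.smul_apply, prod_eb_coord Cm hCm1 hCm2]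
    simp [smul_eq_mul]
  rw [Finset.sum_apply, Finset.sum_congr rfl hterm]
  show entry T π τ = _
  by_cases h : ∃ ρ : Word N, τ = π ++ ρ
  · obtain ⟨ρ, hρ⟩ := h
    have hlhs : entry T π τ = entry T [] ρ := by rw [hρ]; exact sut_entry1 T hT π ρ
    rw [hlhs]
    have hiff : ∀ σ : Word N, (τ = π ++ σ) ↔ σ = ρ := by
      intro σ
      constructor
      · intro hc
        rw [hρ] at hc
        exact List.append_cancel_left hc.symm
      · rintro rfl; exact hρ
    have hstep : (∑ σ ∈ hfin.toFinset, entry T [] σ * (if τ = π ++ σ then 1 else 0))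
        = ∑ σ ∈ hfin.toFinset, (if σ = ρ then entry T [] σ else 0) := by
      refine Finset.sum_congr rfl fun σ _ => ?_
      by_cases hc : σ = ρ
      · simp [hc, (hiff σ).2 hc]
      · rw [if_neg (fun hx => hc ((hiff σ).1 hx)), if_neg hc, mul_zero]
    rw [hstep, Finset.sum_ite_eq' hfin.toFinset ρ (fun σ => entry T [] σ)]
    by_cases hρF : ρ ∈ hfin.toFinset
    · rw [if_pos hρF]
    · rw [if_neg hρF]
      by_contra hc
      exact hρF (hfin.mem_toFinset.mpr (fun h0 => hc (h0 ▸ rfl)))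
  · rw [sut_entry2 T hT π τ h]
    symm
    refine Finset.sum_eq_zero fun σ _ => ?_
    rw [if_neg (fun hc => h ⟨σ, hc⟩), mul_zero]
end
end

section
/- Let n ≥ 1 and let M be an I_n × I_n complex matrix. Then C_{k,n} Mᴴ = Mᴴ C_{k,n} for all k = 1,…,N if and only if M = U(z), where z : I_n → ℂ is the first row of M, z(τ) = M_{∅,τ}. -/
open scoped ComplexOrder Matrix

noncomputable section

namespace CommAux
variable {N n : ℕ}

lemma cmul_apply (A : Matrix (In N n) (In N n) ℂ) (k : Fin N) (s : Word N)
    (hs : (k :: s).length ≤ n) (hs' : s.length ≤ n) (τ : In N n) :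
    ((Cmat k * A : Matrix (In N n) (In N n) ℂ)) ⟨k :: s, hs⟩ τ = A ⟨s, hs'⟩ τ := by
  rw [Matrix.mul_apply, Finset.sum_eq_single (⟨s, hs'⟩ : In N n)]
  · simp [Cmat]
  · intro ρ _ hρ
    have : (k : Fin N) :: s ≠ k :: ρ.1 := by
      intro h
      exact hρ (Subtype.ext (by simpa using h.symm))
    simp [Cmat, this]
  · simp

lemma cmul_apply_zero (A : Matrix (In N n) (In N n) ℂ) (k : Fin N) (σ τ : In N n)
    (h : ∀ t : Word N, σ.1 ≠ k :: t) :
    ((Cmat k * A : Matrix (In N n) (In N n) ℂ)) σ τ = 0 := by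
  rw [Matrix.mul_apply]
  apply Finset.sum_eq_zero
  intro ρ _
  simp [Cmat, h ρ.1]

lemma mulc_apply (A : Matrix (In N n) (In N n) ℂ) (k : Fin N) (σ τ : In N n)
    (ht : (k :: τ.1).length ≤ n) :
    ((A * Cmat k : Matrix (In N n) (In N n) ℂ)) σ τ = A σ ⟨k :: τ.1, ht⟩ := by
  rw [Matrix.mul_apply, Finset.sum_eq_single (⟨k :: τ.1, ht⟩ : In N n)]
  · simp [Cmat]
  · intro ρ _ hρ
    have : ρ.1 ≠ k :: τ.1 := fun h => hρ (Subtype.ext h)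
    simp [Cmat, this]
  · simp

lemma mulc_apply_zero (A : Matrix (In N n) (In N n) ℂ) (k : Fin N) (σ τ : In N n)
    (ht : ¬ (k :: τ.1).length ≤ n) :
    ((A * Cmat k : Matrix (In N n) (In N n) ℂ)) σ τ = 0 := by
  rw [Matrix.mul_apply]
  apply Finset.sum_eq_zero
  intro ρ _
  have : ρ.1 ≠ k :: τ.1 := by
    intro h
    exact ht (h ▸ ρ.2)
  simp [Cmat, this]

lemma umat_zero (x : In N n → ℂ) (σ τ : In N n) (h : ¬ σ.1 <+: τ.1) :
    Umat x σ τ = 0 := by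
  simp [Umat, h]

lemma umat_cons (x : In N n → ℂ) (k : Fin N) (s t : Word N)
    (h1 : (k :: s).length ≤ n) (h2 : (k :: t).length ≤ n)
    (h1' : s.length ≤ n) (h2' : t.length ≤ n) :
    Umat x ⟨k :: s, h1⟩ ⟨k :: t, h2⟩ = Umat x ⟨s, h1'⟩ ⟨t, h2'⟩ := by
  simp only [Umat, Matrix.of_apply]
  by_cases h : s <+: t
  · rw [dif_pos (by simpa [List.cons_prefix_cons] using h), dif_pos h]
    exact congrArg x (Subtype.ext (by simp))
  · rw [dif_neg (by simpa [List.cons_prefix_cons] using h)]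
    try rw [dif_neg h]

variable {N n : ℕ}

lemma umat_comm (x : In N n → ℂ) (k : Fin N) :
    Cmat k * (Umat x)ᴴ = (Umat x)ᴴ * Cmat k := by
  ext σ τ
  obtain ⟨s, hs⟩ := σ
  cases s with
  | nil =>
    rw [cmul_apply_zero _ k _ τ (by simp)]
    by_cases ht : (k :: τ.1).length ≤ n
    · rw [mulc_apply _ k _ τ ht, Matrix.conjTranspose_apply,
        umat_zero x _ _ (by simp)]
      simp
    · rw [mulc_apply_zero _ k _ τ ht]
  | cons a s =>
    have hs' : s.length ≤ n := Nat.le_of_succ_le hs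
    by_cases hak : a = k
    · subst hak
      rw [cmul_apply _ a s hs hs' τ, Matrix.conjTranspose_apply]
      by_cases ht : (a :: τ.1).length ≤ n
      · rw [mulc_apply _ a _ τ ht, Matrix.conjTranspose_apply,
          umat_cons x a τ.1 s ht hs τ.2 hs']
      · rw [mulc_apply_zero _ a _ τ ht]
        have hτn : ¬ τ.1 <+: s := by
          intro hp
          have h1 := hp.length_le
          have h2 := τ.2
          simp only [List.length_cons, not_le] at ht hs
          omega
        rw [umat_zero x τ _ hτn]
        simp
    · rw [cmul_apply_zero _ k _ τ (fun t h => hak (List.cons_eq_cons.mp h).1)]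
      by_cases ht : (k :: τ.1).length ≤ n
      · rw [mulc_apply _ k _ τ ht, Matrix.conjTranspose_apply,
          umat_zero x _ _ (by
            intro hp
            rw [List.cons_prefix_cons] at hp
            exact hak hp.1.symm)]
        simp
      · rw [mulc_apply_zero _ k _ τ ht]

end CommAux

open CommAux

/-- An `I_n × I_n` matrix `M` satisfies `C_{k,n} Mᴴ = Mᴴ C_{k,n}` for all
`k` iff `M = U(z)` where `z` is the first row of `M`. -/
theorem commutation_iff_Umat {N n : ℕ} (hN : 1 ≤ N) (hn : 1 ≤ n)
    (M : Matrix (In N n) (In N n) ℂ) :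
    (∀ k : Fin N, Cmat k * Mᴴ = Mᴴ * Cmat k) ↔
      M = Umat (fun τ => M ⟨[], Nat.zero_le n⟩ τ) := by
  constructor
  · intro hcomm
    ext σ τ
    obtain ⟨s, hs⟩ := σ
    induction s generalizing τ with
    | nil =>
      simp only [Umat, Matrix.of_apply]
      rw [dif_pos (List.nil_prefix)]
      exact (congrArg (M ⟨[], Nat.zero_le n⟩) (Subtype.ext (by simp))).symm
    | cons k s ih =>
      have hs' : s.length ≤ n := Nat.le_of_succ_le hs
      obtain ⟨u, hu⟩ := τ
      cases u with
      | nil =>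
        have h0 := congrFun (congrFun (hcomm k) ⟨[], hu⟩) ⟨s, hs'⟩
        rw [cmul_apply_zero _ k _ _ (by simp), mulc_apply _ k _ _ hs,
          Matrix.conjTranspose_apply] at h0
        have h1 : M ⟨k :: s, hs⟩ ⟨[], hu⟩ = 0 := star_eq_zero.mp h0.symm
        rw [h1, umat_zero _ _ _ (by simp)]
      | cons a t =>
        have ht' : t.length ≤ n := Nat.le_of_succ_le hu
        by_cases hak : a = k
        · subst hak
          have h0 := congrFun (congrFun (hcomm a) ⟨a :: t, hu⟩) ⟨s, hs'⟩
          rw [cmul_apply Mᴴ a t hu ht', mulc_apply _ a _ _ hs,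
            Matrix.conjTranspose_apply, Matrix.conjTranspose_apply] at h0
          have h1 : M ⟨a :: s, hs⟩ ⟨a :: t, hu⟩ = M ⟨s, hs'⟩ ⟨t, ht'⟩ :=
            (star_injective h0).symm
          rw [h1, umat_cons _ a s t hs hu hs' ht']
          exact ih ⟨t, ht'⟩ hs'
        · have h0 := congrFun (congrFun (hcomm k) ⟨a :: t, hu⟩) ⟨s, hs'⟩
          rw [cmul_apply_zero _ k _ _ (fun t' h => hak (List.cons_eq_cons.mp h).1),
            mulc_apply _ k _ _ hs, Matrix.conjTranspose_apply] at h0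
          have h1 : M ⟨k :: s, hs⟩ ⟨a :: t, hu⟩ = 0 := star_eq_zero.mp h0.symm
          rw [h1, umat_zero _ _ _ (by
            intro hp
            rw [List.cons_prefix_cons] at hp
            exact hak hp.1.symm)]
  · intro h k
    rw [h]
    exact umat_comm _ k
end
end

section
/- Let K : F_N^+ × F_N^+ → ℂ satisfy K(∅,∅) = 1, K(τ,σ) = conj(K(σ,τ)) for all σ,τ, and K(aσ,bτ) = K(σ,τ) if a = b, K(aσ,bτ) = 0 if a ≠ b, for all letters a,b and words σ,τ. Fix n ≥ 1, let K_n be the I_n × I_n matrix with entries K(σ,τ), and define x, y : I_n → ℂ by x(σ) = K(∅,σ) (so x(∅) = 1), y(∅) = 0, and y(σ) = K(∅,σ) for σ ≠ ∅. Then K_n = U(x)ᴴ U(x) − U(y)ᴴ U(y). -/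
open scoped ComplexOrder Matrix

noncomputable section

/-- For a hermitian structured kernel `K` with `K(∅,∅) = 1`, the truncation
`K_n` factors as `K_n = U(x)ᴴ U(x) − U(y)ᴴ U(y)`. -/
theorem truncation_factorization {N n : ℕ} (hN : 1 ≤ N) (hn : 1 ≤ n)
    (K : Word N → Word N → ℂ) (hK1 : K [] [] = 1)
    (hherm : ∀ σ τ : Word N, K τ σ = (starRingEnd ℂ) (K σ τ))
    (hstr : ∀ (a b : Fin N) (σ τ : Word N),
      K (a :: σ) (b :: τ) = if a = b then K σ τ else 0)
    (x y : In N n → ℂ)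
    (hx : ∀ σ : In N n, x σ = K [] σ.1)
    (hy0 : y ⟨[], Nat.zero_le n⟩ = 0)
    (hy : ∀ σ : In N n, σ.1 ≠ [] → y σ = K [] σ.1) :
    (Matrix.of fun σ τ : In N n => K σ.1 τ.1)
      = (Umat x)ᴴ * Umat x - (Umat y)ᴴ * Umat y := by
  -- K is invariant under appending a common prefix
  have Kpref : ∀ (ρ σ τ : Word N), K (ρ ++ σ) (ρ ++ τ) = K σ τ := by
    intro ρ
    induction ρ with
    | nil => intro σ τ; rfl
    | cons a ρ ih => intro σ τ; simpa [hstr] using ih σ τ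
  have Kdiag : ∀ σ : Word N, K σ σ = 1 := by
    intro σ
    have := Kpref σ [] []
    simpa [hK1] using this
  have Kzero : ∀ (σ τ : Word N), ¬ σ <+: τ → ¬ τ <+: σ → K σ τ = 0 := by
    intro σ
    induction σ with
    | nil => intro τ h1 _; exact absurd List.nil_prefix h1
    | cons a σ ih =>
      intro τ h1 h2
      cases τ with
      | nil => exact absurd List.nil_prefix h2
      | cons b τ =>
        rw [hstr]
        by_cases hab : a = b
        · subst hab
          rw [if_pos rfl]
          exact ih τ (fun h => h1 (List.cons_prefix_cons.mpr ⟨rfl, h⟩))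
            (fun h => h2 (List.cons_prefix_cons.mpr ⟨rfl, h⟩))
        · rw [if_neg hab]
  have Kpre : ∀ σ τ : Word N, σ <+: τ → K σ τ = K [] (τ.drop σ.length) := by
    intro σ τ h
    obtain ⟨w, hw⟩ := h
    subst hw
    rw [List.drop_left]
    have := Kpref σ [] w
    simpa using this
  -- the values of x and y at the empty word
  have hx1 : ∀ pf : ([] : Word N).length ≤ n, x ⟨[], pf⟩ = 1 := by
    intro pf; rw [hx]; exact hK1
  have hy1 : ∀ pf : ([] : Word N).length ≤ n, y ⟨[], pf⟩ = 0 := by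
    intro pf; exact hy0
  have hxy : ∀ s : In N n, s.1 ≠ [] → x s = y s := by
    intro s hs; rw [hx, hy s hs]
  ext σ τ
  simp only [Matrix.sub_apply, Matrix.mul_apply, Matrix.conjTranspose_apply, Matrix.of_apply,
    ← Finset.sum_sub_distrib]
  set f : In N n → ℂ := fun ρ =>
    star (Umat x ρ σ) * Umat x ρ τ - star (Umat y ρ σ) * Umat y ρ τ with hf
  -- the summand vanishes off {σ, τ}
  have key : ∀ ρ : In N n, ρ ≠ σ → ρ ≠ τ → f ρ = 0 := by
    intro ρ hρσ hρτ
    simp only [hf, Umat, Matrix.of_apply]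
    by_cases h1 : ρ.1 <+: σ.1
    · by_cases h2 : ρ.1 <+: τ.1
      · simp only [dif_pos h1, dif_pos h2]
        have hσ' : σ.1.drop ρ.1.length ≠ [] := by
          intro h
          apply hρσ
          apply Subtype.ext
          have hlen : σ.1.length ≤ ρ.1.length := by
            have := List.drop_eq_nil_iff.mp h
            simpa using this
          exact (List.IsPrefix.eq_of_length h1 (le_antisymm h1.length_le hlen))
        have hτ' : τ.1.drop ρ.1.length ≠ [] := by
          intro h
          apply hρτ
          apply Subtype.ext
          have hlen : τ.1.length ≤ ρ.1.length := by
            have := List.drop_eq_nil_iff.mp h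
            simpa using this
          exact (List.IsPrefix.eq_of_length h2 (le_antisymm h2.length_le hlen))
        rw [hxy _ hσ', hxy _ hτ']
        ring
      · simp [dif_neg h2]
    · simp [dif_neg h1]
  have hsub : ∑ ρ : In N n, f ρ = ∑ ρ ∈ ({σ, τ} : Finset (In N n)), f ρ := by
    refine (Finset.sum_subset (Finset.subset_univ _) ?_).symm
    intro ρ _ hρ
    simp only [Finset.mem_insert, Finset.mem_singleton, not_or] at hρ
    exact key ρ hρ.1 hρ.2
  rw [hsub]
  -- compute f at σ and τ
  have selfpre : ∀ s : In N n, Umat x s s = 1 ∧ Umat y s s = 0 := by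
    intro s
    constructor
    · simp only [Umat, Matrix.of_apply, dif_pos (List.prefix_refl s.1)]
      simpa [List.drop_length] using hx1 (by simp)
    · simp only [Umat, Matrix.of_apply, dif_pos (List.prefix_refl s.1)]
      simpa [List.drop_length] using hy1 (by simp)
  by_cases hστ : σ = τ
  · subst hστ
    rw [Finset.pair_eq_singleton, Finset.sum_singleton]
    simp [hf, (selfpre σ).1, (selfpre σ).2, Kdiag]
  · rw [Finset.sum_pair hστ]
    have fσ : f σ = Umat x σ τ := by
      simp [hf, (selfpre σ).1, (selfpre σ).2]
    have fτ : f τ = star (Umat x τ σ) := by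
      simp [hf, (selfpre τ).1, (selfpre τ).2]
    rw [fσ, fτ]
    by_cases h1 : σ.1 <+: τ.1
    · have h2 : ¬ τ.1 <+: σ.1 := by
        intro h2
        exact hστ (Subtype.ext (h1.eq_of_length (le_antisymm h1.length_le h2.length_le)))
      simp only [Umat, Matrix.of_apply, dif_pos h1, dif_neg h2, star_zero, add_zero]
      rw [hx]
      simpa using Kpre σ.1 τ.1 h1
    · by_cases h2 : τ.1 <+: σ.1
      · simp only [Umat, Matrix.of_apply, dif_neg h1, dif_pos h2, zero_add]
        rw [hx, ← Kpre τ.1 σ.1 h2, hherm σ.1 τ.1]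
        simp
      · simp only [Umat, Matrix.of_apply, dif_neg h1, dif_neg h2, star_zero, add_zero,
          mul_zero, zero_add]
        exact Kzero σ.1 τ.1 h1 h2
end
end

section
/- Let n ≥ 1 and let B, R be I_n × I_n complex matrices such that B − Σ_{k=1}^N C_{k,n} B C_{k,n}ᴴ = R. Then B = Σ_{σ ∈ I_n} C_{σ,n} R C_{σ,n}ᴴ, where for σ = i_1⋯i_k, C_{σ,n} = C_{i_1,n}·C_{i_2,n}·⋯·C_{i_k,n} and C_{∅,n} = I. In particular, B is uniquely determined by R. -/
/-!
Write `T X = ∑ₖ C_k X C_kᴴ` and `S X = ∑_{σ ∈ I_n} C_σ X C_σᴴ`. Since `C_σ C_k = C_{σk}` and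
`C_w = 0` once `|w| > n`, the sum `S (T X)` runs over exactly the nonempty words of `I_n`, so
`S (X - T X) = X`. Applied to `X = B` this gives `S R = B`.
-/

open scoped ComplexOrder Matrix

noncomputable section

namespace In

variable {N n : ℕ}

def consEquiv : In N (n + 1) ≃ Option (Fin N × In N n) where
  toFun
    | ⟨[], _⟩ => none
    | ⟨k :: σ, h⟩ => some (k, ⟨σ, Nat.le_of_succ_le_succ h⟩)
  invFun
    | none => ⟨[], Nat.zero_le _⟩
    | some (k, σ) => ⟨k :: σ.1, Nat.succ_le_succ σ.2⟩
  left_inv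
    | ⟨[], _⟩ => rfl
    | ⟨_ :: _, _⟩ => rfl
  right_inv
    | none => rfl
    | some _ => rfl

def reverse : Equiv.Perm (In N n) :=
  Function.Involutive.toPerm (fun σ => ⟨σ.1.reverse, by simpa using σ.2⟩)
    fun σ => Subtype.ext σ.1.reverse_reverse

variable {M : Type*} [AddCommMonoid M]

theorem sum_succ (g : Word N → M) :
    ∑ σ : In N (n + 1), g σ.1 = g [] + ∑ k, ∑ σ : In N n, g (k :: σ.1) := by
  rw [← consEquiv.symm.sum_comp, Fintype.sum_option, Fintype.sum_prod_type]
  rfl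

theorem sum_succ_of_eq_zero {g : Word N → M} (hg : ∀ w : Word N, n < w.length → g w = 0) :
    ∑ σ : In N (n + 1), g σ.1 = ∑ σ : In N n, g σ.1 := by
  refine (Fintype.sum_of_injective (fun σ : In N n => (⟨σ.1, σ.2.trans n.le_succ⟩ : In N (n + 1)))
    (fun σ τ hστ => Subtype.ext (congrArg Subtype.val hστ :)) _ _ ?_ fun _ => rfl).symm
  intro σ hσ
  exact hg _ (not_le.mp fun hle => hσ ⟨⟨σ.1, hle⟩, rfl⟩)

theorem sum_reverse (g : Word N → M) : ∑ σ : In N n, g σ.1.reverse = ∑ σ : In N n, g σ.1 :=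
  Equiv.sum_comp reverse fun σ => g σ.1

theorem sum_eq_add_sum_concat {g : Word N → M} (hg : ∀ w : Word N, n < w.length → g w = 0) :
    ∑ σ : In N n, g σ.1 = g [] + ∑ σ : In N n, ∑ k, g (σ.1 ++ [k]) := by
  have hg' : ∀ w : Word N, n < w.length → g w.reverse = 0 := fun w hw =>
    hg _ (by rwa [List.length_reverse])
  calc ∑ σ : In N n, g σ.1
      = ∑ σ : In N n, g σ.1.reverse := (sum_reverse g).symm
    _ = ∑ σ : In N (n + 1), g σ.1.reverse := (sum_succ_of_eq_zero hg').symm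
    _ = g [] + ∑ k, ∑ σ : In N n, g (k :: σ.1).reverse :=
      sum_succ fun w => g w.reverse
    _ = g [] + ∑ σ : In N n, ∑ k, g (σ.1 ++ [k]) := by
      rw [Finset.sum_comm, ← sum_reverse fun σ => ∑ k, g (σ ++ [k])]
      simp

end In

section Cword

variable {N n : ℕ}

def Cword (σ : Word N) : Matrix (In N n) (In N n) ℂ :=
  (σ.map Cmat).prod

theorem Cword_cons (k : Fin N) (σ : Word N) :
    (Cword (k :: σ) : Matrix (In N n) (In N n) ℂ) = Cmat k * Cword σ :=
  List.prod_cons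

theorem Cword_concat (σ : Word N) (k : Fin N) :
    (Cword (σ ++ [k]) : Matrix (In N n) (In N n) ℂ) = Cword σ * Cmat k := by
  simp [Cword]

theorem Cword_apply (σ : Word N) (α τ : In N n) :
    Cword σ α τ = if α.1 = σ ++ τ.1 then 1 else 0 := by
  induction σ generalizing α with
  | nil => simp [Cword, Matrix.one_apply, Subtype.ext_iff]
  | cons k σ ih =>
    rw [Cword_cons, Matrix.mul_apply]
    simp only [Cmat, Matrix.of_apply, ih, mul_ite, mul_one, mul_zero]
    by_cases hα : α.1 = k :: (σ ++ τ.1)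
    · have hlen : (σ ++ τ.1).length ≤ n := le_of_lt (by simpa [hα] using α.2)
      rw [Finset.sum_eq_single ⟨σ ++ τ.1, hlen⟩] <;> simp_all [Subtype.ext_iff]
    · exact (Finset.sum_eq_zero fun β _ => by split_ifs <;> simp_all).trans (if_neg hα).symm

theorem Cword_eq_zero_of_length_lt {σ : Word N} (hσ : n < σ.length) :
    (Cword σ : Matrix (In N n) (In N n) ℂ) = 0 := by
  ext α τ
  rw [Cword_apply, Matrix.zero_apply, if_neg]
  intro hα
  have hlen := α.2
  rw [hα, List.length_append] at hlen
  omega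

end Cword

theorem sum_Cword_conj_sub_sum_Cmat_conj {N n : ℕ} (X : Matrix (In N n) (In N n) ℂ) :
    ∑ σ : In N n, Cword σ.1 * (X - ∑ k, Cmat k * X * (Cmat k)ᴴ) * (Cword σ.1)ᴴ = X := by
  have hvanish : ∀ w : Word N, n < w.length → Cword w * X * (Cword w)ᴴ = 0 := fun w hw => by
    simp [Cword_eq_zero_of_length_lt hw]
  have hpeel := In.sum_eq_add_sum_concat hvanish
  simp only [Cword_concat, Matrix.conjTranspose_mul, Matrix.mul_assoc] at hpeel
  simp only [Matrix.mul_sub, Matrix.sub_mul, Finset.sum_sub_distrib, Matrix.mul_sum,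
    Matrix.sum_mul, Matrix.mul_assoc, hpeel]
  simp [Cword]

theorem displacement_unique_solution_general {N n : ℕ}
    (B R : Matrix (In N n) (In N n) ℂ)
    (h : B - ∑ k : Fin N, Cmat k * B * (Cmat k)ᴴ = R) :
    B = ∑ σ : In N n,
      (σ.1.map (Cmat (N := N) (n := n))).prod * R * ((σ.1.map (Cmat (N := N) (n := n))).prod)ᴴ := by
  rw [← h]
  exact (sum_Cword_conj_sub_sum_Cmat_conj B).symm

/-- If `B − ∑ₖ C_{k,n} B C_{k,n}ᴴ = R` then
`B = ∑_{σ ∈ I_n} C_{σ,n} R C_{σ,n}ᴴ`, where `C_{σ,n} = C_{i₁,n}⋯C_{i_k,n}` for `σ = i₁⋯i_k`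
and `C_{∅,n} = 1`; in particular `B` is uniquely determined by `R`. -/
theorem displacement_unique_solution {N n : ℕ} (hN : 1 ≤ N) (hn : 1 ≤ n)
    (B R : Matrix (In N n) (In N n) ℂ)
    (h : B - ∑ k : Fin N, Cmat k * B * (Cmat k)ᴴ = R) :
    B = ∑ σ : In N n,
      (σ.1.map (Cmat (N := N) (n := n))).prod * R * ((σ.1.map (Cmat (N := N) (n := n))).prod)ᴴ :=
  displacement_unique_solution_general B R h
end
end
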